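/- arXiv:2411.13094 — 10 statements merged into one kernel-verified Lean document; each statement's English description precedes it below -/
import Mathlib

section
/- Let α ∈ (-1,1), α ≠ 0, and let z ∈ ℂ satisfy |z| > 1. Then the quadratic equation (α(α-1)/2)·κ² + (1-α²-z)·κ + (α(α+1)/2) = 0 has exactly one root with |κ| > 1 and exactly one root with 0 < |κ| < 1. -/
/-!
Dividing the dispersion relation by `κ` turns it into `z = S(κ)` with
`S(κ) = 1 - α² + Aκ + Cκ⁻¹`, `A = α(α-1)/2`, `C = α(α+1)/2`. The identity
`α²|κ|²(1 - |S(κ)|²) = (1-α²)(A|κ|² + C - α² Re κ)² - (|κ|² - 1)(A²|κ|² - C²)`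
shows that `|S(κ)| > 1` forces `(|κ|² - 1)(A²|κ|² - C²) > 0`: the ellipses `S(r·𝕊¹)` lie in the
closed unit disk for `r` between `1` and `|C/A|`. The two roots `κ₁, κ₂` satisfy `Aκ₁κ₂ = C`, so
for `κ₁` this condition reads `A²|κ₁|²(|κ₁|² - 1)(1 - |κ₂|²) > 0`, and exactly one root lies
outside the unit circle.
-/

open Complex

theorem exists_quadratic_eq_mul_sub_mul_sub {K : Type*} [Field K] [IsAlgClosed K]
    [NeZero (2 : K)] {a : K} (b c : K) (ha : a ≠ 0) :
    ∃ x₁ x₂ : K, ∀ x, a * x ^ 2 + b * x + c = a * (x - x₁) * (x - x₂) := by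
  obtain ⟨x₁, hx₁⟩ :=
    exists_quadratic_eq_zero ha (IsAlgClosed.exists_eq_mul_self (discrim a b c))
  refine ⟨x₁, -b / a - x₁, fun x => ?_⟩
  have hb : a * (b / a) = b := mul_div_cancel₀ b ha
  linear_combination hx₁ - (x - x₁) * hb

theorem one_lt_and_lt_one_or_lt_one_and_one_lt {t₁ t₂ : ℝ} (ht₁ : 0 ≤ t₁) (ht₂ : 0 ≤ t₂)
    (h : 0 < (t₁ ^ 2 - 1) * (1 - t₂ ^ 2)) : (1 < t₁ ∧ t₂ < 1) ∨ (t₁ < 1 ∧ 1 < t₂) := by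
  rcases mul_pos_iff.1 h with ⟨h₁, h₂⟩ | ⟨h₁, h₂⟩
  · exact Or.inl ⟨(one_lt_sq_iff₀ ht₁).1 (by linarith), (sq_lt_one_iff₀ ht₂).1 (by linarith)⟩
  · exact Or.inr ⟨(sq_lt_one_iff₀ ht₁).1 (by linarith), (one_lt_sq_iff₀ ht₂).1 (by linarith)⟩

theorem existsUnique_one_lt_norm_and_existsUnique_norm_lt_one {E : Type*} [Norm E]
    {P : E → Prop} {u v : E} (hP : ∀ x, P x ↔ x = u ∨ x = v)
    (hu : 1 < ‖u‖) (hv₀ : 0 < ‖v‖) (hv : ‖v‖ < 1) :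
    (∃! x, P x ∧ 1 < ‖x‖) ∧ (∃! x, P x ∧ 0 < ‖x‖ ∧ ‖x‖ < 1) := by
  constructor
  · refine ⟨u, ⟨(hP u).2 (Or.inl rfl), hu⟩, fun x ⟨hx, hx₁⟩ => ?_⟩
    rcases (hP x).1 hx with rfl | rfl
    · rfl
    · linarith
  · refine ⟨v, ⟨(hP v).2 (Or.inr rfl), hv₀, hv⟩, fun x ⟨hx, _, hx₁⟩ => ?_⟩
    rcases (hP x).1 hx with rfl | rfl
    · linarith
    · rfl

namespace LaxWendroff

/-- At `κ = e^{-iξ}` this is `1 - 2α² sin²(ξ/2) + iα sin ξ`, a point of the spectral ellipse. -/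
noncomputable def symbol (α : ℝ) (κ : ℂ) : ℂ :=
  ((1 - α ^ 2 : ℝ) : ℂ) + ((α * (α - 1) / 2 : ℝ) : ℂ) * κ + ((α * (α + 1) / 2 : ℝ) : ℂ) * κ⁻¹

theorem symbol_eq_of_root {α : ℝ} {z κ : ℂ} (hκ : κ ≠ 0)
    (h : ((α * (α - 1) / 2 : ℝ) : ℂ) * κ ^ 2 + (1 - (α : ℂ) ^ 2 - z) * κ
        + ((α * (α + 1) / 2 : ℝ) : ℂ) = 0) :
    symbol α κ = z := by
  rw [symbol]
  field_simp
  push_cast at h ⊢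
  linear_combination h

theorem normSq_mul_one_sub_normSq_symbol (α : ℝ) {κ : ℂ} (hκ : κ ≠ 0) :
    α ^ 2 * normSq κ * (1 - normSq (symbol α κ)) =
      (1 - α ^ 2) * (α * (α - 1) / 2 * normSq κ + α * (α + 1) / 2 - α ^ 2 * κ.re) ^ 2
        - (normSq κ - 1) * ((α * (α - 1) / 2) ^ 2 * normSq κ - (α * (α + 1) / 2) ^ 2) := by
  have hs := (normSq_pos.2 hκ).ne'
  simp only [symbol, normSq_apply, add_re, add_im, mul_re, mul_im, ofReal_re, ofReal_im,
    inv_re, inv_im, ← sq] at hs ⊢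
  field_simp
  ring

theorem sub_one_mul_sub_pos_of_one_lt_norm_symbol {α : ℝ} (hα : α ^ 2 < 1) (hα0 : α ≠ 0)
    {κ : ℂ} (hκ : κ ≠ 0) (h : 1 < ‖symbol α κ‖) :
    0 < (normSq κ - 1) * ((α * (α - 1) / 2) ^ 2 * normSq κ - (α * (α + 1) / 2) ^ 2) := by
  have hS : 1 < normSq (symbol α κ) := by
    rw [normSq_eq_norm_sq]
    exact (one_lt_sq_iff₀ (norm_nonneg _)).2 h
  have hneg : α ^ 2 * normSq κ * (1 - normSq (symbol α κ)) < 0 :=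
    mul_neg_of_pos_of_neg (by have := normSq_pos.2 hκ; positivity) (by linarith)
  rw [normSq_mul_one_sub_normSq_symbol α hκ] at hneg
  nlinarith [mul_nonneg (sub_nonneg.2 hα.le)
    (sq_nonneg (α * (α - 1) / 2 * normSq κ + α * (α + 1) / 2 - α ^ 2 * κ.re))]

theorem sub_one_mul_one_sub_normSq_pos_of_one_lt_norm_symbol {α : ℝ} (hα : α ^ 2 < 1)
    (hα0 : α ≠ 0) {κ₁ κ₂ : ℂ} (hκ₁ : κ₁ ≠ 0)
    (hprod : ((α * (α + 1) / 2 : ℝ) : ℂ) = ((α * (α - 1) / 2 : ℝ) : ℂ) * κ₁ * κ₂)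
    (h : 1 < ‖symbol α κ₁‖) :
    0 < (normSq κ₁ - 1) * (1 - normSq κ₂) := by
  have hnormSq := congrArg normSq hprod
  simp only [normSq_mul, normSq_ofReal] at hnormSq
  have hfactor : (normSq κ₁ - 1) * ((α * (α - 1) / 2) ^ 2 * normSq κ₁ - (α * (α + 1) / 2) ^ 2)
      = ((α * (α - 1) / 2) ^ 2 * normSq κ₁) * ((normSq κ₁ - 1) * (1 - normSq κ₂)) := by
    rw [sq, sq, hnormSq]
    ring
  exact pos_of_mul_pos_right (hfactor ▸ sub_one_mul_sub_pos_of_one_lt_norm_symbol hα hα0 hκ₁ h)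
    (mul_nonneg (sq_nonneg _) (normSq_nonneg _))

end LaxWendroff

open LaxWendroff in
/-- The Lax-Wendroff dispersion relation `(α(α-1)/2)κ² + (1-α²-z)κ + (α(α+1)/2) = 0`
has, for `|z| > 1`, exactly one root with `|κ| > 1` and exactly one with `0 < |κ| < 1`. -/
theorem stmt_0 (α : ℝ) (hα : α ∈ Set.Ioo (-1 : ℝ) 1) (hα0 : α ≠ 0)
    (z : ℂ) (hz : 1 < ‖z‖) :
    (∃! κ : ℂ, ((α * (α - 1) / 2 : ℝ) : ℂ) * κ ^ 2 + (1 - (α : ℂ) ^ 2 - z) * κ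
        + ((α * (α + 1) / 2 : ℝ) : ℂ) = 0 ∧ 1 < ‖κ‖) ∧
    (∃! κ : ℂ, ((α * (α - 1) / 2 : ℝ) : ℂ) * κ ^ 2 + (1 - (α : ℂ) ^ 2 - z) * κ
        + ((α * (α + 1) / 2 : ℝ) : ℂ) = 0 ∧ 0 < ‖κ‖ ∧ ‖κ‖ < 1) := by
  have hα2 : α ^ 2 < 1 := by nlinarith [hα.1, hα.2]
  have hA : ((α * (α - 1) / 2 : ℝ) : ℂ) ≠ 0 :=
    ofReal_ne_zero.2 (div_ne_zero (mul_ne_zero hα0 (sub_neg.2 hα.2).ne) two_ne_zero)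
  have hC : ((α * (α + 1) / 2 : ℝ) : ℂ) ≠ 0 :=
    ofReal_ne_zero.2 (div_ne_zero (mul_ne_zero hα0 (neg_lt_iff_pos_add.1 hα.1).ne') two_ne_zero)
  obtain ⟨κ₁, κ₂, hfactor⟩ := exists_quadratic_eq_mul_sub_mul_sub (1 - (α : ℂ) ^ 2 - z)
    ((α * (α + 1) / 2 : ℝ) : ℂ) hA
  have hroots : ∀ κ : ℂ, ((α * (α - 1) / 2 : ℝ) : ℂ) * κ ^ 2 + (1 - (α : ℂ) ^ 2 - z) * κ
      + ((α * (α + 1) / 2 : ℝ) : ℂ) = 0 ↔ κ = κ₁ ∨ κ = κ₂ := by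
    simp only [hfactor, mul_eq_zero, hA, false_or, sub_eq_zero, implies_true]
  have hprod : ((α * (α + 1) / 2 : ℝ) : ℂ) = ((α * (α - 1) / 2 : ℝ) : ℂ) * κ₁ * κ₂ := by
    simpa using hfactor 0
  have hκ₁ : κ₁ ≠ 0 := by rintro rfl; simp only [mul_zero, zero_mul] at hprod; exact hC hprod
  have hκ₂ : κ₂ ≠ 0 := by rintro rfl; simp only [mul_zero] at hprod; exact hC hprod
  have hsep := sub_one_mul_one_sub_normSq_pos_of_one_lt_norm_symbol hα2 hα0 hκ₁ hprod
    (symbol_eq_of_root hκ₁ ((hroots κ₁).2 (Or.inl rfl)) ▸ hz)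
  rw [normSq_eq_norm_sq, normSq_eq_norm_sq] at hsep
  rcases one_lt_and_lt_one_or_lt_one_and_one_lt (norm_nonneg _) (norm_nonneg _) hsep with
    ⟨h₁, h₂⟩ | ⟨h₁, h₂⟩
  · exact existsUnique_one_lt_norm_and_existsUnique_norm_lt_one hroots h₁ (norm_pos_iff.2 hκ₂) h₂
  · exact existsUnique_one_lt_norm_and_existsUnique_norm_lt_one
      (fun κ => (hroots κ).trans or_comm) h₂ (norm_pos_iff.2 hκ₁) h₁
end

section
/- Let α ∈ (-1,1), α ≠ 0. The two roots of (α(α-1)/2)·κ² + (1-α²-z)·κ + (α(α+1)/2) = 0 (as a quadratic in κ) have equal modulus if and only if z belongs to the segment {1 - α² + i t α √(1-α²) : t ∈ [-1,1]}. -/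
/-!
The roots of `a κ² + b κ + c` are `(-b ± s) / (2a)` with `s² = b² - 4ac`, so they have equal
modulus iff `‖b + s‖ = ‖b - s‖`, i.e. iff `b` and `s` are orthogonal as vectors of `ℝ²`.
Here `-4ac = α²(1 - α²) = r²` with `r = α √(1 - α²)`, and writing `b = x + iy`, `s = u + iv`,
the relations `s² = b² + r²` and `xu + yv = 0` force `x = 0` and `y² ≤ r²`: the middle
coefficient `b = 1 - α² - z` lies on the segment `i [-r, r]`.
-/

theorem forall_quadratic_roots_norm_eq_iff {K : Type*} [NormedField K] [NeZero (2 : K)]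
    {a b c s : K} (ha : a ≠ 0) (hs : discrim a b c = s * s) :
    (∀ x y : K, a * x ^ 2 + b * x + c = 0 → a * y ^ 2 + b * y + c = 0 → ‖x‖ = ‖y‖) ↔
      ‖b + s‖ = ‖b - s‖ := by
  have roots (x : K) :
      a * x ^ 2 + b * x + c = 0 ↔ x = (-b + s) / (2 * a) ∨ x = (-b - s) / (2 * a) := by
    rw [sq]; exact quadratic_eq_zero_iff ha hs x
  have norm_plus : ‖(-b + s) / (2 * a)‖ = ‖b - s‖ / ‖2 * a‖ := by
    rw [norm_div, ← norm_neg, neg_add_eq_sub, neg_sub]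
  have norm_minus : ‖(-b - s) / (2 * a)‖ = ‖b + s‖ / ‖2 * a‖ := by
    rw [norm_div, ← norm_neg, neg_sub, sub_neg_eq_add, add_comm]
  have h2a : ‖2 * a‖ ≠ 0 := norm_ne_zero_iff.mpr (mul_ne_zero two_ne_zero ha)
  constructor
  · intro h
    have := h _ _ ((roots _).2 (Or.inr rfl)) ((roots _).2 (Or.inl rfl))
    rwa [norm_plus, norm_minus, div_left_inj' h2a] at this
  · intro h x y hx hy
    have norm_root : ∀ x, a * x ^ 2 + b * x + c = 0 → ‖x‖ = ‖b + s‖ / ‖2 * a‖ := by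
      intro x hx
      rcases (roots x).1 hx with rfl | rfl
      · rw [norm_plus, h]
      · rw [norm_minus]
    rw [norm_root x hx, norm_root y hy]

theorem norm_add_eq_norm_sub_iff_real_inner_eq_zero {F : Type*} [NormedAddCommGroup F]
    [InnerProductSpace ℝ F] (x y : F) : ‖x + y‖ = ‖x - y‖ ↔ inner ℝ x y = 0 :=
  (InnerProductGeometry.norm_add_eq_norm_sub_iff_angle_eq_pi_div_two x y).trans
    (InnerProductGeometry.inner_eq_zero_iff_angle_eq_pi_div_two x y).symm

namespace Complex

theorem inner_eq_zero_iff_of_sq_eq_sq_add {b s : ℂ} {q : ℝ} (hq : 0 ≤ q) (hs : s ^ 2 = b ^ 2 + q) :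
    inner ℝ b s = 0 ↔ b.re = 0 ∧ b.im ^ 2 ≤ q := by
  have hre : s.re ^ 2 - s.im ^ 2 = b.re ^ 2 - b.im ^ 2 + q := by
    simpa [sq] using congrArg re hs
  have him : s.re * s.im = b.re * b.im := by
    have := congrArg im hs
    simp only [sq, mul_im, add_im, ofReal_im, add_zero] at this
    linarith
  rw [Complex.inner]
  simp only [mul_re, conj_re, conj_im]
  constructor
  · intro horth
    have sq_add_sq_eq_zero : (b.im * s.im) ^ 2 + (b.re * b.im) ^ 2 = 0 := by
      linear_combination (b.im * s.im) * horth - (b.re * b.im) * him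
    have himim : b.im * s.im = 0 := by nlinarith [sq_nonneg (b.re * b.im)]
    have hreim : b.re * b.im = 0 := by nlinarith [sq_nonneg (b.im * s.im)]
    have hrere : b.re * s.re = 0 := by linarith
    have hb : b.re = 0 := by
      by_contra hb
      have hsre : s.re = 0 := (mul_eq_zero.1 hrere).resolve_left hb
      have hbim : b.im = 0 := (mul_eq_zero.1 hreim).resolve_left hb
      nlinarith [sq_nonneg s.im, mul_self_pos.2 hb]
    refine ⟨hb, ?_⟩
    rcases eq_or_ne b.im 0 with hbim | hbim
    · simpa [hbim] using hq
    · have hsim : s.im = 0 := (mul_eq_zero.1 himim).resolve_left hbim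
      nlinarith [sq_nonneg s.re]
  · rintro ⟨hb, hbq⟩
    have hsim : s.im = 0 := by
      rcases mul_eq_zero.1 (him.trans (by rw [hb, zero_mul])) with hsre | hsim
      · nlinarith [sq_nonneg s.im, sq_nonneg b.im]
      · exact hsim
    rw [hb, hsim]; ring

theorem re_eq_zero_and_im_sq_le_sq_iff (b : ℂ) (r : ℝ) :
    b.re = 0 ∧ b.im ^ 2 ≤ r ^ 2 ↔ ∃ t ∈ Set.Icc (-1 : ℝ) 1, b = I * t * r := by
  constructor
  · rintro ⟨hre, him⟩
    rcases eq_or_ne r 0 with rfl | hr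
    · refine ⟨0, by norm_num, ext ?_ ?_⟩ <;> simp_all
    · refine ⟨b.im / r, ?_, ext ?_ ?_⟩
      · rw [Set.mem_Icc, ← abs_le, ← sq_le_one_iff_abs_le_one, div_pow,
          div_le_one (by positivity)]
        exact him
      · simp [hre]
      · simp [hr]
  · rintro ⟨t, ⟨ht₁, ht₂⟩, rfl⟩
    have ht : 0 ≤ (1 - t) * (1 + t) := mul_nonneg (by linarith) (by linarith)
    simp only [mul_re, I_re, ofReal_re, I_im, ofReal_im, mul_im]
    constructor
    · ring
    · nlinarith [mul_nonneg ht (sq_nonneg r)]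

end Complex

/-- The two roots of the Lax-Wendroff dispersion relation have equal modulus
iff `z` lies on the segment `{1 - α² + i t α √(1-α²) : t ∈ [-1,1]}`. -/
theorem stmt_1 (α : ℝ) (hα : α ∈ Set.Ioo (-1 : ℝ) 1) (hα0 : α ≠ 0) (z : ℂ) :
    (∀ κ₁ κ₂ : ℂ,
        ((α * (α - 1) / 2 : ℝ) : ℂ) * κ₁ ^ 2 + (1 - (α : ℂ) ^ 2 - z) * κ₁
          + ((α * (α + 1) / 2 : ℝ) : ℂ) = 0 →
        ((α * (α - 1) / 2 : ℝ) : ℂ) * κ₂ ^ 2 + (1 - (α : ℂ) ^ 2 - z) * κ₂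
          + ((α * (α + 1) / 2 : ℝ) : ℂ) = 0 →
        ‖κ₁‖ = ‖κ₂‖) ↔
    ∃ t ∈ Set.Icc (-1 : ℝ) 1,
      z = 1 - (α : ℂ) ^ 2 + Complex.I * (t : ℂ) * (α : ℂ) * (Real.sqrt (1 - α ^ 2) : ℂ) := by
  obtain ⟨hα₁, hα₂⟩ := hα
  set r : ℝ := α * √(1 - α ^ 2)
  have hr : r ^ 2 = α ^ 2 * (1 - α ^ 2) := by rw [mul_pow, Real.sq_sqrt (by nlinarith)]
  have ha : ((α * (α - 1) / 2 : ℝ) : ℂ) ≠ 0 := by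
    have : α - 1 ≠ 0 := by linarith
    exact_mod_cast div_ne_zero (mul_ne_zero hα0 this) two_ne_zero
  obtain ⟨s, hs⟩ := IsAlgClosed.exists_eq_mul_self
    (discrim ((α * (α - 1) / 2 : ℝ) : ℂ) (1 - (α : ℂ) ^ 2 - z) ((α * (α + 1) / 2 : ℝ) : ℂ))
  have hs' : s ^ 2 = (1 - (α : ℂ) ^ 2 - z) ^ 2 + ((r ^ 2 : ℝ) : ℂ) := by
    rw [sq s, ← hs, discrim, hr]; push_cast; ring
  rw [forall_quadratic_roots_norm_eq_iff ha hs, norm_add_eq_norm_sub_iff_real_inner_eq_zero,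
    Complex.inner_eq_zero_iff_of_sq_eq_sq_add (sq_nonneg r) hs', ← neg_sq r,
    Complex.re_eq_zero_and_im_sq_le_sq_iff]
  refine exists_congr fun t => and_congr_right fun _ => ?_
  constructor <;> intro h <;> push_cast [r] at h ⊢ <;> linear_combination -h
end

section
/- Let α_ℓ ∈ (0,1), α_r ∈ (-1,0), and α_m ∈ [α_r, α_ℓ]. Define β := (1-α_m²)·[(α_ℓ-α_r)² - (α_m(α_ℓ+α_r) - 2α_ℓα_r)²]. Then β > 0. -/
/-! With `t = αm - αr ≥ 0` and `u = αl - αm ≥ 0`, the inner term is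
`αm (αl + αr) - 2 αl αr = αl t + (-αr) u`, a combination of `t` and `u` with weights
in `(0, 1)`.
It therefore lies in `[0, t + u) = [0, αl - αr)`, so the second factor of `β` is positive;
the first is positive because `|αm| < 1`. -/

lemma mul_add_sub_two_mul_eq (a b m : ℝ) :
    m * (a + b) - 2 * a * b = a * (m - b) + (-b) * (a - m) := by
  ring

lemma mul_add_sub_two_mul_mem_Ico {a b m : ℝ} (ha : a ∈ Set.Ioo (0 : ℝ) 1)
    (hb : b ∈ Set.Ioo (-1 : ℝ) 0) (hm : m ∈ Set.Icc b a) :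
    m * (a + b) - 2 * a * b ∈ Set.Ico 0 (a - b) := by
  obtain ⟨ha0, ha1⟩ := ha
  obtain ⟨hb1, hb0⟩ := hb
  obtain ⟨hbm, hma⟩ := hm
  have ht : 0 ≤ m - b := sub_nonneg.mpr hbm
  have hu : 0 ≤ a - m := sub_nonneg.mpr hma
  rw [mul_add_sub_two_mul_eq]
  constructor
  · exact add_nonneg (mul_nonneg ha0.le ht) (mul_nonneg (neg_nonneg.mpr hb0.le) hu)
  · nlinarith [mul_nonneg (sub_nonneg.mpr ha1.le) ht,
      mul_nonneg (neg_le_iff_add_nonneg.mp hb1.le) hu,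
      mul_pos (sub_pos.mpr ha1) (neg_lt_iff_pos_add.mp hb1)]

/-- Positivity of the coefficient `β` in the quartic equation for the zeros of
the Lopatinskii determinant. -/
theorem stmt_4 (αl αr αm : ℝ) (hl : αl ∈ Set.Ioo (0 : ℝ) 1)
    (hr : αr ∈ Set.Ioo (-1 : ℝ) 0) (hm : αm ∈ Set.Icc αr αl) :
    0 < (1 - αm ^ 2) * ((αl - αr) ^ 2 - (αm * (αl + αr) - 2 * αl * αr) ^ 2) := by
  have hαm : αm ^ 2 < 1 := (sq_lt_one_iff_abs_lt_one αm).mpr <|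
    abs_lt.mpr ⟨by linarith [hr.1, hm.1], by linarith [hl.2, hm.2]⟩
  obtain ⟨hg0, hgd⟩ := mul_add_sub_two_mul_mem_Ico hl hr hm
  have hsq : (αm * (αl + αr) - 2 * αl * αr) ^ 2 < (αl - αr) ^ 2 :=
    pow_lt_pow_left₀ hgd hg0 two_ne_zero
  exact mul_pos (sub_pos.mpr hαm) (sub_pos.mpr hsq)
end

section
/- Let α_ℓ ∈ (0,1), α_r ∈ (-1,0), α_m ∈ [α_r, α_ℓ], and Z ≥ 0. Define D(α_m, Z) := α_m(α_ℓ+α_r) + 2α_ℓ|α_r| + √(Z² + 2α_ℓ²Z + α_ℓ²) + √(Z² + 2α_r²Z + α_r²) + (Z + α_mα_r)·(Z+α_ℓ²)/√(Z² + 2α_ℓ²Z + α_ℓ²) + (Z + α_mα_ℓ)·(Z+α_r²)/√(Z² + 2α_r²Z + α_r²). Then D(α_m, Z) ≥ α_ℓ + |α_r| > 0. -/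
/-!
Both square roots dominate the corresponding `|α|`, which pays for `α_ℓ + |α_r|`. What is left,
`α_m (α_ℓ + α_r) + 2 α_ℓ |α_r| + (Z + α_m α_r) a + (Z + α_m α_ℓ) b`, only involves the ratios
`a, b = (Z + α²) / √(Z² + 2α²Z + α²)`, which lie in `[0, 1]` because `(Z + α²)² ≤ Z² + 2α²Z + α²`
for `α² ≤ 1`. It is affine in `α_m`, and at `α_m = α_ℓ` and `α_m = α_r` it is a sum of nonnegative
terms.
-/

lemma abs_le_sqrt_quad {α Z : ℝ} (hZ : 0 ≤ Z) : |α| ≤ √(Z ^ 2 + 2 * α ^ 2 * Z + α ^ 2) :=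
  Real.abs_le_sqrt (by nlinarith [mul_nonneg (sq_nonneg α) hZ])

lemma add_sq_le_sqrt_quad {α Z : ℝ} (hα : α ^ 2 ≤ 1) :
    Z + α ^ 2 ≤ √(Z ^ 2 + 2 * α ^ 2 * Z + α ^ 2) :=
  (le_abs_self _).trans <| Real.abs_le_sqrt <| by
    nlinarith [mul_nonneg (sq_nonneg α) (sub_nonneg.mpr hα)]

lemma div_sqrt_quad_mem_Icc {α Z : ℝ} (hZ : 0 ≤ Z) (hα : α ^ 2 ≤ 1) :
    (Z + α ^ 2) / √(Z ^ 2 + 2 * α ^ 2 * Z + α ^ 2) ∈ Set.Icc (0 : ℝ) 1 :=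
  ⟨by positivity, div_le_one_of_le₀ (add_sq_le_sqrt_quad hα) (Real.sqrt_nonneg _)⟩

lemma affine_nonneg_of_nonneg_of_nonneg {c k s t u : ℝ} (hs : 0 ≤ c + s * k)
    (ht : 0 ≤ c + t * k) (hsu : s ≤ u) (hut : u ≤ t) : 0 ≤ c + u * k := by
  rcases le_total 0 k with hk | hk
  · nlinarith
  · nlinarith

lemma bracket_nonneg {αl αr αm Z a b : ℝ} (hl : 0 ≤ αl) (hr : αr ≤ 0)
    (hm : αm ∈ Set.Icc αr αl) (hZ : 0 ≤ Z) (ha : a ∈ Set.Icc (0 : ℝ) 1)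
    (hb : b ∈ Set.Icc (0 : ℝ) 1) :
    0 ≤ αm * (αl + αr) - 2 * αl * αr + (Z + αm * αr) * a + (Z + αm * αl) * b := by
  obtain ⟨ha0, ha1⟩ := ha
  obtain ⟨hb0, hb1⟩ := hb
  set c := Z * (a + b) - 2 * αl * αr
  set k := αl + αr + αr * a + αl * b
  have at_αr : 0 ≤ c + αr * k := by
    have : c + αr * k = Z * (a + b) + αr ^ 2 * (1 + a) + αl * (-αr) * (1 - b) := by ring
    rw [this]
    have := mul_nonneg (mul_nonneg hl (neg_nonneg.mpr hr)) (sub_nonneg.mpr hb1)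
    positivity
  have at_αl : 0 ≤ c + αl * k := by
    have : c + αl * k = Z * (a + b) + αl ^ 2 * (1 + b) + αl * (-αr) * (1 - a) := by ring
    rw [this]
    have := mul_nonneg (mul_nonneg hl (neg_nonneg.mpr hr)) (sub_nonneg.mpr ha1)
    positivity
  have := affine_nonneg_of_nonneg_of_nonneg at_αr at_αl hm.1 hm.2
  linarith

/-- Lower bound `D(α_m, Z) ≥ α_ℓ + |α_r| > 0` for the quantity controlling
`α_ℓ α_r Δ'(z)` on the half-line `z ≥ 1`. -/
theorem stmt_6 (αl αr αm Z : ℝ) (hl : αl ∈ Set.Ioo (0 : ℝ) 1)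
    (hr : αr ∈ Set.Ioo (-1 : ℝ) 0) (hm : αm ∈ Set.Icc αr αl) (hZ : 0 ≤ Z) :
    αl + |αr| ≤
      αm * (αl + αr) + 2 * αl * |αr|
        + Real.sqrt (Z ^ 2 + 2 * αl ^ 2 * Z + αl ^ 2)
        + Real.sqrt (Z ^ 2 + 2 * αr ^ 2 * Z + αr ^ 2)
        + (Z + αm * αr) * (Z + αl ^ 2) / Real.sqrt (Z ^ 2 + 2 * αl ^ 2 * Z + αl ^ 2)
        + (Z + αm * αl) * (Z + αr ^ 2) / Real.sqrt (Z ^ 2 + 2 * αr ^ 2 * Z + αr ^ 2)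
    ∧ 0 < αl + |αr| := by
  obtain ⟨hl0, hl1⟩ := hl
  obtain ⟨hr1, hr0⟩ := hr
  have hαl : αl ^ 2 ≤ 1 := by nlinarith
  have hαr : αr ^ 2 ≤ 1 := by nlinarith
  have hbracket := bracket_nonneg hl0.le hr0.le hm hZ
    (div_sqrt_quad_mem_Icc hZ hαl) (div_sqrt_quad_mem_Icc hZ hαr)
  have hSl : |αl| ≤ _ := abs_le_sqrt_quad (α := αl) hZ
  have hSr : |αr| ≤ _ := abs_le_sqrt_quad (α := αr) hZ
  rw [abs_of_pos hl0] at hSl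
  rw [abs_of_neg hr0] at hSr ⊢
  simp only [mul_div_assoc]
  constructor <;> linarith
end

section
/- Let α_ℓ ∈ (0,1), α_r ∈ (-1,0), α := max(α_ℓ, |α_r|), α_m ∈ [α_r, α_ℓ], and Z ≤ -2α². Then 𝔻(α_r, Z) := Z² + α_r²Z + α_ℓα_rZ + (|Z| - α_r²)√(Z² + 2α_ℓ²Z + α_ℓ²) + (|Z| + α_ℓ|α_r|)√(Z² + 2α_r²Z + α_r²) + √(Z² + 2α_ℓ²Z + α_ℓ²)·√(Z² + 2α_r²Z + α_r²) - α_ℓ|α_r| satisfies 𝔻(α_r, Z) ≥ 2α⁴ > 0. -/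
/-!
Write `t = -Z ≥ 2α²`. Each square root is bounded below in two ways: by `t - α_•²` (since
`α_•⁴ ≤ α_•²`) and by `α_•` (since `t ≥ 2α_•²`). Using the first bound on the two terms linear
in the roots and the second on their product leaves the polynomial
`3t² - (a² + 3b²)t + 2abt + a²b² - ab³` with `a = α_ℓ`, `b = |α_r|`, which is at least
`t(3t - 4α²) - α⁴ ≥ 3α⁴`.
-/

open Real

lemma neg_sub_sq_le_sqrt_quadratic {a : ℝ} (ha : a ^ 2 ≤ 1) (Z : ℝ) :
    -Z - a ^ 2 ≤ √(Z ^ 2 + 2 * a ^ 2 * Z + a ^ 2) :=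
  le_sqrt_of_sq_le <| by nlinarith [mul_nonneg (sq_nonneg a) (sub_nonneg.2 ha)]

lemma abs_le_sqrt_quadratic {a Z : ℝ} (hZ : Z ≤ -2 * a ^ 2) :
    |a| ≤ √(Z ^ 2 + 2 * a ^ 2 * Z + a ^ 2) :=
  abs_le_sqrt <| by nlinarith

lemma two_mul_pow_four_le_lopatinskii_polynomial {a b A Z : ℝ} (ha : 0 ≤ a) (hb : 0 ≤ b)
    (haA : a ≤ A) (hbA : b ≤ A) (hZ : Z ≤ -2 * A ^ 2) :
    2 * A ^ 4 ≤ Z ^ 2 + b ^ 2 * Z - a * b * Z + (-Z - b ^ 2) * (-Z - a ^ 2)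
      + (-Z + a * b) * (-Z - b ^ 2) := by
  have hab3 : a * b ^ 3 ≤ A ^ 4 := by
    calc a * b ^ 3 ≤ A * A ^ 3 := by gcongr; linarith
    _ = A ^ 4 := by ring
  have hquad : 4 * A ^ 4 ≤ -Z * (-3 * Z - (a ^ 2 + 3 * b ^ 2)) := by
    have : a ^ 2 + 3 * b ^ 2 ≤ 4 * A ^ 2 := by nlinarith
    nlinarith
  nlinarith [mul_nonneg (mul_nonneg ha hb) (show 0 ≤ -Z by nlinarith), sq_nonneg (a * b)]

lemma two_mul_pow_four_le_lopatinskii {a b A Z : ℝ} (ha : 0 ≤ a) (hb : 0 ≤ b)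
    (haA : a ≤ A) (hbA : b ≤ A) (hA : A ≤ 1) (hZ : Z ≤ -2 * A ^ 2) :
    2 * A ^ 4 ≤ Z ^ 2 + b ^ 2 * Z - a * b * Z
      + (-Z - b ^ 2) * √(Z ^ 2 + 2 * a ^ 2 * Z + a ^ 2)
      + (-Z + a * b) * √(Z ^ 2 + 2 * b ^ 2 * Z + b ^ 2)
      + √(Z ^ 2 + 2 * a ^ 2 * Z + a ^ 2) * √(Z ^ 2 + 2 * b ^ 2 * Z + b ^ 2) - a * b := by
  have haZ : Z ≤ -2 * a ^ 2 := by nlinarith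
  have hbZ : Z ≤ -2 * b ^ 2 := by nlinarith
  have hSa := neg_sub_sq_le_sqrt_quadratic (show a ^ 2 ≤ 1 by nlinarith) Z
  have hSb := neg_sub_sq_le_sqrt_quadratic (show b ^ 2 ≤ 1 by nlinarith) Z
  have hab : a * b ≤ √(Z ^ 2 + 2 * a ^ 2 * Z + a ^ 2) * √(Z ^ 2 + 2 * b ^ 2 * Z + b ^ 2) := by
    have h₁ := abs_le_sqrt_quadratic haZ
    have h₂ := abs_le_sqrt_quadratic hbZ
    rw [abs_of_nonneg ha] at h₁
    rw [abs_of_nonneg hb] at h₂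
    exact mul_le_mul h₁ h₂ hb (sqrt_nonneg _)
  have h₁ := mul_le_mul_of_nonneg_left hSa (show 0 ≤ -Z - b ^ 2 by nlinarith)
  have h₂ := mul_le_mul_of_nonneg_left hSb (show 0 ≤ -Z + a * b by nlinarith)
  linarith [two_mul_pow_four_le_lopatinskii_polynomial ha hb haA hbA hZ]

theorem stmt_8_general (αl αr Z : ℝ) (hl : αl ∈ Set.Ioo (0 : ℝ) 1)
    (hr : αr ∈ Set.Ioo (-1 : ℝ) 0)
    (hZ : Z ≤ -2 * (max αl |αr|) ^ 2) :
    2 * (max αl |αr|) ^ 4 ≤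
      Z ^ 2 + αr ^ 2 * Z + αl * αr * Z
        + (|Z| - αr ^ 2) * Real.sqrt (Z ^ 2 + 2 * αl ^ 2 * Z + αl ^ 2)
        + (|Z| + αl * |αr|) * Real.sqrt (Z ^ 2 + 2 * αr ^ 2 * Z + αr ^ 2)
        + Real.sqrt (Z ^ 2 + 2 * αl ^ 2 * Z + αl ^ 2)
          * Real.sqrt (Z ^ 2 + 2 * αr ^ 2 * Z + αr ^ 2)
        - αl * |αr|
    ∧ 0 < 2 * (max αl |αr|) ^ 4 := by
  obtain ⟨hl₀, hl₁⟩ := hl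
  obtain ⟨hr₁, hr₀⟩ := hr
  have hA : max αl |αr| ≤ 1 := max_le hl₁.le (abs_le.2 ⟨hr₁.le, by linarith⟩)
  have hZ₀ : Z < 0 := by nlinarith [(lt_max_of_lt_left hl₀ : 0 < max αl |αr|)]
  have key := two_mul_pow_four_le_lopatinskii hl₀.le (abs_nonneg αr) (le_max_left _ _)
    (le_max_right _ _) hA hZ
  rw [sq_abs, abs_of_neg hr₀] at key
  rw [abs_of_neg hZ₀, abs_of_neg hr₀]
  refine ⟨by linarith, by positivity⟩

/-- Lower bound `𝔻(α_r, Z) ≥ 2α⁴ > 0` for `Z ≤ -2α²`, showing the Lopatinskii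
determinant has no zeros on `(-∞, 1 - 2α²]`. -/
theorem stmt_8 (αl αr αm Z : ℝ) (hl : αl ∈ Set.Ioo (0 : ℝ) 1)
    (hr : αr ∈ Set.Ioo (-1 : ℝ) 0) (hm : αm ∈ Set.Icc αr αl)
    (hZ : Z ≤ -2 * (max αl |αr|) ^ 2) :
    2 * (max αl |αr|) ^ 4 ≤
      Z ^ 2 + αr ^ 2 * Z + αl * αr * Z
        + (|Z| - αr ^ 2) * Real.sqrt (Z ^ 2 + 2 * αl ^ 2 * Z + αl ^ 2)
        + (|Z| + αl * |αr|) * Real.sqrt (Z ^ 2 + 2 * αr ^ 2 * Z + αr ^ 2)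
        + Real.sqrt (Z ^ 2 + 2 * αl ^ 2 * Z + αl ^ 2)
          * Real.sqrt (Z ^ 2 + 2 * αr ^ 2 * Z + αr ^ 2)
        - αl * |αr|
    ∧ 0 < 2 * (max αl |αr|) ^ 4 :=
  stmt_8_general αl αr Z hl hr hZ
end

section
/- In the symmetric case α_r = -α_ℓ with α_ℓ ∈ (0,1): for any z in the resolvent region where κ_ℓ(z) is the root of (α_ℓ(α_ℓ-1)/2)κ² + (1-α_ℓ²-z)κ + (α_ℓ(α_ℓ+1)/2) = 0 with |κ_ℓ(z)| > 1, the Lopatinskii determinant Δ(z) = 1 - α_m² + (α_ℓ - α_m + (1-α_ℓ)κ_ℓ(z))·(α_r - α_m - (1+α_r)/κ_r(z)), with κ_r(z) = 1/κ_ℓ(z), factorizes as Δ(z) = (1-α_ℓ)(1-κ_ℓ(z))(1+α_ℓ+(1-α_ℓ)κ_ℓ(z)), independently of α_m. -/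
theorem stmt_9_general (αl αm : ℝ) (κl : ℂ) :
    1 - (αm : ℂ) ^ 2
      + ((αl : ℂ) - (αm : ℂ) + (1 - (αl : ℂ)) * κl)
        * (((-αl : ℝ) : ℂ) - (αm : ℂ) - (1 + ((-αl : ℝ) : ℂ)) / κl⁻¹)
    = (1 - (αl : ℂ)) * (1 - κl) * (1 + (αl : ℂ) + (1 - (αl : ℂ)) * κl) := by
  -- With `a = αl + (1 - αl) κl` the left side is `1 - αm² + (a - αm)(-a - αm) = 1 - a²`,
  -- and `1 - a = (1 - αl)(1 - κl)`.
  rw [div_inv_eq_mul]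
  push_cast
  ring

/-- In the symmetric case `α_r = -α_ℓ` with `κ_r(z) = 1/κ_ℓ(z)`, the Lopatinskii
determinant factorizes as `(1-α_ℓ)(1-κ_ℓ)(1+α_ℓ+(1-α_ℓ)κ_ℓ)`, independently of `α_m`. -/
theorem stmt_9 (αl αm : ℝ) (hl : αl ∈ Set.Ioo (0 : ℝ) 1) (z κl : ℂ)
    (hroot : ((αl * (αl - 1) / 2 : ℝ) : ℂ) * κl ^ 2 + (1 - (αl : ℂ) ^ 2 - z) * κl
      + ((αl * (αl + 1) / 2 : ℝ) : ℂ) = 0)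
    (hmod : 1 < ‖κl‖) :
    1 - (αm : ℂ) ^ 2
      + ((αl : ℂ) - (αm : ℂ) + (1 - (αl : ℂ)) * κl)
        * (((-αl : ℝ) : ℂ) - (αm : ℂ) - (1 + ((-αl : ℝ) : ℂ)) / κl⁻¹)
    = (1 - (αl : ℂ)) * (1 - κl) * (1 + (αl : ℂ) + (1 - (αl : ℂ)) * κl) :=
  stmt_9_general αl αm κl
end

section
/- In the symmetric case α_r = -α_ℓ, α_ℓ ∈ (0,1): if |z| > 1, then Δ(z) := (1-α_ℓ)(1-κ_ℓ(z))(1+α_ℓ+(1-α_ℓ)κ_ℓ(z)) ≠ 0, where κ_ℓ(z) is the root of modulus > 1 of (α_ℓ(α_ℓ-1)/2)κ² + (1-α_ℓ²-z)κ + (α_ℓ(α_ℓ+1)/2) = 0. -/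
/-! Substituting the zero `κ = -(1 + a) / (1 - a)` of the last factor into the dispersion
relation leaves `(1 + a) (z - 1) = 0`, so that factor can vanish only at `z = 1`. -/

theorem eq_one_of_dispersion_of_lopatinskii_factor_eq_zero {K : Type*} [Field K]
    [NeZero (2 : K)] {a z κ : K} (ha : 1 + a ≠ 0)
    (hroot : a * (a - 1) / 2 * κ ^ 2 + (1 - a ^ 2 - z) * κ + a * (a + 1) / 2 = 0)
    (hκ : 1 + a + (1 - a) * κ = 0) : z = 1 := by
  have hroot₂ : a * (a - 1) * κ ^ 2 + 2 * (1 - a ^ 2 - z) * κ + a * (a + 1) = 0 := by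
    field_simp at hroot
    linear_combination hroot
  have h : 2 * (1 + a) * (z - 1) = 0 := by
    linear_combination (1 - a) * hroot₂
      - (-a * (1 + a + (1 - a) * κ) + 2 * (a * (1 + a) + 1 - a ^ 2 - z)) * hκ
  exact sub_eq_zero.1 ((mul_eq_zero.1 h).resolve_left (mul_ne_zero two_ne_zero ha))

/-- In the symmetric case, the factorized Lopatinskii determinant does not vanish
for `|z| > 1`. -/
theorem stmt_10 (αl : ℝ) (hl : αl ∈ Set.Ioo (0 : ℝ) 1) (z κl : ℂ)
    (hroot : ((αl * (αl - 1) / 2 : ℝ) : ℂ) * κl ^ 2 + (1 - (αl : ℂ) ^ 2 - z) * κl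
      + ((αl * (αl + 1) / 2 : ℝ) : ℂ) = 0)
    (hmod : 1 < ‖κl‖) (hz : 1 < ‖z‖) :
    (1 - (αl : ℂ)) * (1 - κl) * (1 + (αl : ℂ) + (1 - (αl : ℂ)) * κl) ≠ 0 := by
  obtain ⟨hα0, hα1⟩ := hl
  have h1α : (1 : ℂ) - αl ≠ 0 := sub_ne_zero.2 (by exact_mod_cast hα1.ne')
  have h1κ : 1 - κl ≠ 0 := sub_ne_zero.2 fun h => by simp [← h] at hmod
  have h1α' : (1 : ℂ) + αl ≠ 0 := by exact_mod_cast (by linarith : 1 + αl ≠ 0)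
  push_cast at hroot
  refine mul_ne_zero (mul_ne_zero h1α h1κ) fun hκ => ?_
  have hz1 := eq_one_of_dispersion_of_lopatinskii_factor_eq_zero h1α' hroot hκ
  simp [hz1] at hz
end

section
/- Let β₁ > 0 and define H(w) := e^{i β₁ w} ∫_{-1}^{1} e^{-3β₁ w u²} e^{β₁(1-i) w u³} du for w ≥ 0. Then there exists a constant C > 0, depending only on β₁, such that |∫_0^w H(w') dw'| ≤ C for all w ≥ 0. -/
/-!
Writing `φ(u) = (u³ - 3u²) + i(1 - u³)`, the integrand of the double integral is `exp(β₁ φ(u) w')`.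
Integrating in `w'` first, each inner integral equals `(exp(β₁ φ(u) w) - 1) / (β₁ φ(u))`. Since
`Re φ ≤ 0` on `u ≤ 1` the numerator has norm at most `2`, and since moreover `‖φ‖ ≥ 1/2` there,
the inner integrals are bounded by `4 / β₁`, uniformly in `w ≥ 0`.
-/

open MeasureTheory Set

theorem intervalIntegral_intervalIntegral_swap_of_continuous {E : Type*} [NormedAddCommGroup E]
    [NormedSpace ℝ E] {F : ℝ → ℝ → E} (hF : Continuous (Function.uncurry F)) (a b c d : ℝ) :
    ∫ x in a..b, ∫ y in c..d, F x y = ∫ y in c..d, ∫ x in a..b, F x y :=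
  intervalIntegral_intervalIntegral_swap <|
    (hF.continuousOn.integrableOn_compact (isCompact_uIcc.prod isCompact_uIcc)).mono_set
      (prod_mono uIoc_subset_uIcc uIoc_subset_uIcc)

theorem norm_integral_exp_mul_le {z : ℂ} (hz : z ≠ 0) (hre : z.re ≤ 0) {w : ℝ} (hw : 0 ≤ w) :
    ‖∫ t in (0 : ℝ)..w, Complex.exp (z * t)‖ ≤ 2 / ‖z‖ := by
  have norm_exp_le : ∀ t : ℝ, 0 ≤ t → ‖Complex.exp (z * t)‖ ≤ 1 := fun t ht => by
    rw [Complex.norm_exp, Real.exp_le_one_iff, Complex.re_mul_ofReal]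
    exact mul_nonpos_of_nonpos_of_nonneg hre ht
  rw [integral_exp_mul_complex hz, norm_div]
  gcongr
  calc ‖Complex.exp (z * w) - Complex.exp (z * (0 : ℝ))‖
      ≤ ‖Complex.exp (z * w)‖ + ‖Complex.exp (z * (0 : ℝ))‖ := norm_sub_le _ _
    _ ≤ 1 + 1 := add_le_add (norm_exp_le w hw) (norm_exp_le 0 le_rfl)
    _ = 2 := by norm_num

noncomputable def lwPhase (u : ℝ) : ℂ :=
  ((u ^ 3 - 3 * u ^ 2 : ℝ) : ℂ) + ((1 - u ^ 3 : ℝ) : ℂ) * Complex.I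

namespace lwPhase

@[simp] theorem re (u : ℝ) : (lwPhase u).re = u ^ 3 - 3 * u ^ 2 := by
  simp [lwPhase, -Complex.ofReal_pow]

@[simp] theorem im (u : ℝ) : (lwPhase u).im = 1 - u ^ 3 := by
  simp [lwPhase, -Complex.ofReal_pow]

@[fun_prop] theorem continuous : Continuous lwPhase := by
  unfold lwPhase; fun_prop

theorem re_nonpos {u : ℝ} (hu : u ≤ 1) : (lwPhase u).re ≤ 0 := by
  rw [re]; nlinarith [sq_nonneg u]

theorem half_le_norm {u : ℝ} (h : u ≤ 1) : (1 / 2 : ℝ) ≤ ‖lwPhase u‖ := by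
  rcases le_or_gt u (1 / 2) with hu | hu
  · calc (1 / 2 : ℝ) ≤ (lwPhase u).im := by rw [im]; nlinarith [sq_nonneg u, sq_nonneg (u + 1)]
      _ ≤ ‖lwPhase u‖ := (le_abs_self _).trans (Complex.abs_im_le_norm _)
  · calc (1 / 2 : ℝ) ≤ -(lwPhase u).re := by rw [re]; nlinarith
      _ ≤ ‖lwPhase u‖ := (neg_le_abs _).trans (Complex.abs_re_le_norm _)

theorem exp_mul_eq (β w u : ℝ) :
    Complex.exp (Complex.I * (β : ℂ) * (w : ℂ)) *
        (Complex.exp (((-3 * β * w * u ^ 2 : ℝ) : ℂ)) *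
          Complex.exp (((β * w * u ^ 3 : ℝ) : ℂ) * (1 - Complex.I))) =
      Complex.exp (β * lwPhase u * w) := by
  rw [← Complex.exp_add, ← Complex.exp_add]
  congr 1
  simp only [lwPhase]
  push_cast
  ring

theorem norm_integral_exp_le {β : ℝ} (hβ : 0 < β) {u : ℝ} (hu : u ≤ 1) {w : ℝ}
    (hw : 0 ≤ w) : ‖∫ t in (0 : ℝ)..w, Complex.exp (β * lwPhase u * t)‖ ≤ 4 / β := by
  have hnorm : β / 2 ≤ ‖(β : ℂ) * lwPhase u‖ := by
    rw [norm_mul, Complex.norm_real, Real.norm_of_nonneg hβ.le]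
    nlinarith [half_le_norm hu]
  have hne : (β : ℂ) * lwPhase u ≠ 0 :=
    norm_pos_iff.mp ((half_pos hβ).trans_le hnorm)
  have hre : ((β : ℂ) * lwPhase u).re ≤ 0 := by
    rw [Complex.re_ofReal_mul]
    exact mul_nonpos_of_nonneg_of_nonpos hβ.le (re_nonpos hu)
  calc _ ≤ 2 / ‖(β : ℂ) * lwPhase u‖ := norm_integral_exp_mul_le hne hre hw
    _ ≤ 2 / (β / 2) := by gcongr
    _ = 4 / β := by ring

end lwPhase

/-- Uniform bound for the primitive of
`H(w) = e^{iβ₁w} ∫_{-1}^1 e^{-3β₁wu²} e^{β₁(1-i)wu³} du`. -/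
theorem stmt_13 (β₁ : ℝ) (hβ : 0 < β₁) :
    ∃ C > (0 : ℝ), ∀ w : ℝ, 0 ≤ w →
      ‖∫ w' in (0 : ℝ)..w,
          Complex.exp (Complex.I * (β₁ : ℂ) * (w' : ℂ)) *
            ∫ u in (-1 : ℝ)..(1 : ℝ),
              Complex.exp (((-3 * β₁ * w' * u ^ 2 : ℝ) : ℂ)) *
                Complex.exp (((β₁ * w' * u ^ 3 : ℝ) : ℂ) * (1 - Complex.I))‖ ≤ C := by
  refine ⟨8 / β₁, by positivity, fun w hw => ?_⟩
  simp_rw [← intervalIntegral.integral_const_mul, lwPhase.exp_mul_eq]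
  rw [intervalIntegral_intervalIntegral_swap_of_continuous (by fun_prop)]
  calc _ ≤ 4 / β₁ * |1 - (-1 : ℝ)| :=
        intervalIntegral.norm_integral_le_of_norm_le_const fun u hu => by
          rw [uIoc_of_le (by norm_num)] at hu
          exact lwPhase.norm_integral_exp_le hβ hu.2 hw
    _ = 8 / β₁ := by rw [show |1 - (-1 : ℝ)| = 2 by norm_num]; ring
end

section
/- Fix c₃ ≠ 0 and c₄ > 0 and define G(x,y) := (1/(2π)) ∫_ℝ e^{i x θ} e^{i c₃ y θ³} e^{-c₄ y θ⁴} dθ for x ∈ ℝ, y > 0. Then there exists C > 0 such that for all y > 0 and all x ∈ ℝ, |G(x,y)| ≤ C·y^{-1/3}. -/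
/-!
With `b = c₃ y` and `c = c₄ y`, the integrand is `e^{-cθ⁴} e^{i(xθ + bθ³)}`. Reflecting `θ ↦ -θ`
and conjugating turn both half-lines into `∫_0^∞` with positive cubic coefficient. Since the
amplitude `e^{-cθ⁴}` decreases from `1` there, integrating by parts against the partial integrals
`∫_0^T e^{i(aθ + bθ³)} dθ` bounds the half-line integral by their supremum. Those are bounded by
van der Corput's lemma: on `[0, T]` the phase derivative `a + 3bθ²` exceeds `3bδ²` in absolute
value outside a window of length `2δ` around the stationary point, and `δ = b^{-1/3}`
balances the first derivative test against the trivial bound on the window.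
-/

open MeasureTheory intervalIntegral Set Filter Complex

section FirstDerivativeTest

variable {φ φ' φ'' : ℝ → ℝ}

lemma hasDerivAt_cexp_I_mul_div_deriv {θ : ℝ} (hφ : HasDerivAt φ (φ' θ) θ)
    (hφ' : HasDerivAt φ' (φ'' θ) θ) (hne : φ' θ ≠ 0) :
    HasDerivAt (fun θ ↦ -I * cexp (I * φ θ) * ((φ' θ)⁻¹ : ℝ))
      (cexp (I * φ θ) + I * cexp (I * φ θ) * ((φ'' θ / φ' θ ^ 2 : ℝ) : ℂ)) θ := by
  have hexp := (hφ.ofReal_comp.const_mul I).cexp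
  have hinv : HasDerivAt (fun θ ↦ (((φ' θ)⁻¹ : ℝ) : ℂ)) ((-φ'' θ / φ' θ ^ 2 : ℝ) : ℂ) θ :=
    (hφ'.inv hne).ofReal_comp
  refine ((hexp.const_mul (-I)).mul hinv).congr_deriv ?_
  have : (φ' θ : ℂ) ≠ 0 := ofReal_ne_zero.mpr hne
  push_cast
  field_simp
  ring_nf
  rw [I_sq]
  ring

lemma integral_div_sq_eq_inv_sub_inv {s t : ℝ} (hst : s ≤ t)
    (hφ' : ∀ θ ∈ Icc s t, HasDerivAt φ' (φ'' θ) θ)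
    (hquot_cont : ContinuousOn (fun θ ↦ φ'' θ / φ' θ ^ 2) (Icc s t))
    (hne : ∀ θ ∈ Icc s t, φ' θ ≠ 0) :
    ∫ θ in s..t, φ'' θ / φ' θ ^ 2 = (φ' s)⁻¹ - (φ' t)⁻¹ := by
  have hprim : ∀ θ ∈ uIcc s t, HasDerivAt (fun θ ↦ -(φ' θ)⁻¹) (φ'' θ / φ' θ ^ 2) θ := by
    intro θ hθ
    rw [uIcc_of_le hst] at hθ
    have := ((hφ' θ hθ).inv (hne θ hθ)).neg
    rwa [neg_div, neg_neg] at this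
  rw [integral_eq_sub_of_hasDerivAt hprim (hquot_cont.intervalIntegrable_of_Icc hst)]
  ring

theorem norm_intervalIntegral_cexp_I_mul_le {s t lam : ℝ} (hst : s ≤ t) (hlam : 0 < lam)
    (hφ : ∀ θ ∈ Icc s t, HasDerivAt φ (φ' θ) θ) (hφ' : ∀ θ ∈ Icc s t, HasDerivAt φ' (φ'' θ) θ)
    (hφ''_cont : ContinuousOn φ'' (Icc s t)) (hφ''_nonneg : ∀ θ ∈ Icc s t, 0 ≤ φ'' θ)
    (hlam_le : ∀ θ ∈ Icc s t, lam ≤ |φ' θ|) :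
    ‖∫ θ in s..t, cexp (I * φ θ)‖ ≤ 4 / lam := by
  have hne : ∀ θ ∈ Icc s t, φ' θ ≠ 0 := fun θ hθ h ↦ by
    have := hlam_le θ hθ; rw [h, abs_zero] at this; linarith
  have hinv_le : ∀ θ ∈ Icc s t, |φ' θ|⁻¹ ≤ 1 / lam := fun θ hθ ↦
    one_div lam ▸ inv_anti₀ hlam (hlam_le θ hθ)
  have hφ_cont : ContinuousOn φ (Icc s t) := fun θ hθ ↦ (hφ θ hθ).continuousAt.continuousWithinAt
  have hφ'_cont : ContinuousOn φ' (Icc s t) :=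
    fun θ hθ ↦ (hφ' θ hθ).continuousAt.continuousWithinAt
  set F : ℝ → ℂ := fun θ ↦ -I * cexp (I * φ θ) * ((φ' θ)⁻¹ : ℝ)
  set r : ℝ → ℂ := fun θ ↦ I * cexp (I * φ θ) * ((φ'' θ / φ' θ ^ 2 : ℝ) : ℂ)
  have hexp_int : IntervalIntegrable (fun θ ↦ cexp (I * φ θ)) volume s t :=
    ContinuousOn.intervalIntegrable_of_Icc hst (by fun_prop)
  have hquot_cont : ContinuousOn (fun θ ↦ φ'' θ / φ' θ ^ 2) (Icc s t) :=
    hφ''_cont.div (hφ'_cont.pow 2) fun θ hθ ↦ pow_ne_zero 2 (hne θ hθ)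
  have hr_int : IntervalIntegrable r volume s t :=
    ContinuousOn.intervalIntegrable_of_Icc hst (by fun_prop)
  have hF : ∫ θ in s..t, cexp (I * φ θ) = F t - F s - ∫ θ in s..t, r θ := by
    rw [← integral_eq_sub_of_hasDerivAt (f := F) _ (hexp_int.add hr_int),
      integral_add hexp_int hr_int]
    · ring
    · intro θ hθ
      rw [uIcc_of_le hst] at hθ
      exact hasDerivAt_cexp_I_mul_div_deriv (hφ θ hθ) (hφ' θ hθ) (hne θ hθ)
  have hF_le : ∀ θ ∈ Icc s t, ‖F θ‖ ≤ 1 / lam := fun θ hθ ↦ by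
    simpa [F, norm_exp_I_mul_ofReal] using hinv_le θ hθ
  have hr_le : ‖∫ θ in s..t, r θ‖ ≤ 2 / lam := by
    have hr_norm : ∀ θ ∈ Icc s t, ‖r θ‖ = φ'' θ / φ' θ ^ 2 := fun θ hθ ↦ by
      simp [r, norm_exp_I_mul_ofReal, abs_of_nonneg (hφ''_nonneg θ hθ)]
    calc ‖∫ θ in s..t, r θ‖ ≤ ∫ θ in s..t, φ'' θ / φ' θ ^ 2 :=
          norm_integral_le_of_norm_le hst (Eventually.of_forall fun θ hθ ↦
            (hr_norm θ (Ioc_subset_Icc_self hθ)).le) (hquot_cont.intervalIntegrable_of_Icc hst)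
      _ = (φ' s)⁻¹ - (φ' t)⁻¹ := integral_div_sq_eq_inv_sub_inv hst hφ' hquot_cont hne
      _ ≤ |φ' s|⁻¹ + |φ' t|⁻¹ := by
          rw [← abs_inv, ← abs_inv]; linarith [le_abs_self (φ' s)⁻¹, neg_abs_le (φ' t)⁻¹]
      _ ≤ 1 / lam + 1 / lam :=
          add_le_add (hinv_le s (left_mem_Icc.2 hst)) (hinv_le t (right_mem_Icc.2 hst))
      _ = 2 / lam := by ring
  calc ‖∫ θ in s..t, cexp (I * φ θ)‖ ≤ ‖F t‖ + ‖F s‖ + ‖∫ θ in s..t, r θ‖ := by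
        rw [hF]; exact (norm_sub_le _ _).trans (add_le_add_left (norm_sub_le _ _) _)
    _ ≤ 1 / lam + 1 / lam + 2 / lam := by
        gcongr
        exacts [hF_le t (right_mem_Icc.2 hst), hF_le s (left_mem_Icc.2 hst)]
    _ = 4 / lam := by ring

end FirstDerivativeTest

noncomputable def cubicOsc (a b θ : ℝ) : ℂ :=
  cexp (I * ↑(a * θ + b * θ ^ 3))

lemma norm_cubicOsc (a b θ : ℝ) : ‖cubicOsc a b θ‖ = 1 :=
  norm_exp_I_mul_ofReal _

@[fun_prop]
lemma continuous_cubicOsc (a b : ℝ) : Continuous (cubicOsc a b) := by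
  unfold cubicOsc; fun_prop

lemma conj_cubicOsc (a b θ : ℝ) : starRingEnd ℂ (cubicOsc a b θ) = cubicOsc (-a) (-b) θ := by
  simp only [cubicOsc, ← exp_conj, map_mul, conj_I, conj_ofReal]
  congr 1
  push_cast
  ring

lemma cubicOsc_neg (a b θ : ℝ) : cubicOsc a b (-θ) = cubicOsc (-a) (-b) θ := by
  simp only [cubicOsc]
  congr 3
  ring

theorem norm_integral_cubicOsc_le_of_le_abs_deriv {a b s t lam : ℝ} (hb : 0 ≤ b) (hs : 0 ≤ s)
    (hst : s ≤ t) (hlam : 0 < lam) (hlam_le : ∀ θ ∈ Icc s t, lam ≤ |a + 3 * b * θ ^ 2|) :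
    ‖∫ θ in s..t, cubicOsc a b θ‖ ≤ 4 / lam :=
  norm_intervalIntegral_cexp_I_mul_le (φ'' := fun θ ↦ 6 * b * θ) hst hlam
    (fun θ _ ↦ (((hasDerivAt_id θ).const_mul a).add ((hasDerivAt_pow 3 θ).const_mul b)).congr_deriv
      (by simp; ring))
    (fun θ _ ↦ (((hasDerivAt_pow 2 θ).const_mul (3 * b)).const_add a).congr_deriv (by simp; ring))
    (by fun_prop) (fun θ hθ ↦ by have := hs.trans hθ.1; positivity) hlam_le

theorem norm_integral_cubicOsc_le_of_window {a b m δ T : ℝ} (hb : 0 < b) (hδ : 0 < δ)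
    (hT : 0 ≤ T) (hm : 0 ≤ m) (ham : 0 ≤ a + 3 * b * m ^ 2)
    (hstat : 0 < m → a + 3 * b * m ^ 2 = 0) :
    ‖∫ θ in (0 : ℝ)..T, cubicOsc a b θ‖ ≤ 2 * δ + 8 / (3 * b * δ ^ 2) := by
  have hlam : 0 < 3 * b * δ ^ 2 := by positivity
  set u := min T (max 0 (m - δ))
  set v := min T (m + δ)
  have hu : 0 ≤ u := le_min hT (le_max_left _ _)
  have huv : u ≤ v := min_le_min le_rfl (max_le (by positivity) (by linarith))
  have hvT : v ≤ T := min_le_left _ _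
  have hint : ∀ s t, IntervalIntegrable (cubicOsc a b) volume s t :=
    fun s t ↦ (continuous_cubicOsc a b).intervalIntegrable s t
  have hleft : ‖∫ θ in (0 : ℝ)..u, cubicOsc a b θ‖ ≤ 4 / (3 * b * δ ^ 2) := by
    rcases hu.eq_or_lt with hu0 | hu0
    · rw [← hu0, integral_same, norm_zero]; positivity
    have hum : u ≤ m - δ := by
      rcases le_total (m - δ) 0 with h | h
      · exact absurd ((min_le_right _ _).trans (max_eq_left h).le) hu0.not_ge
      · exact (min_le_right _ _).trans (max_eq_right h).le
    have ham0 := hstat (by linarith)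
    refine norm_integral_cubicOsc_le_of_le_abs_deriv hb.le le_rfl hu hlam fun θ hθ ↦ ?_
    have : δ ^ 2 ≤ m ^ 2 - θ ^ 2 := by nlinarith [hθ.1, hθ.2]
    rw [abs_of_neg (by nlinarith)]
    nlinarith
  have hmiddle : ‖∫ θ in u..v, cubicOsc a b θ‖ ≤ 2 * δ := by
    refine (norm_integral_le_of_norm_le_const fun θ _ ↦ (norm_cubicOsc a b θ).le).trans ?_
    rw [one_mul, abs_of_nonneg (sub_nonneg.2 huv)]
    rcases le_total T (m - δ) with h | h
    · linarith [(min_eq_left (h.trans (le_max_right 0 _)) : u = T)]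
    · linarith [(le_min h (le_max_right 0 _) : m - δ ≤ u), min_le_right T (m + δ)]
  have hright : ‖∫ θ in v..T, cubicOsc a b θ‖ ≤ 4 / (3 * b * δ ^ 2) := by
    rcases hvT.eq_or_lt with hvT | hvT
    · rw [hvT, integral_same, norm_zero]; positivity
    have hv : v = m + δ := min_eq_right (le_of_not_ge fun h ↦ hvT.ne (min_eq_left h))
    refine norm_integral_cubicOsc_le_of_le_abs_deriv hb.le (hu.trans huv) hvT.le hlam
      fun θ hθ ↦ le_abs.2 (Or.inl ?_)
    have : δ ^ 2 ≤ θ ^ 2 - m ^ 2 := by nlinarith [hθ.1]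
    nlinarith
  rw [← integral_add_adjacent_intervals (hint 0 u) (hint u T),
    ← integral_add_adjacent_intervals (hint u v) (hint v T)]
  calc _ ≤ 4 / (3 * b * δ ^ 2) + (2 * δ + 4 / (3 * b * δ ^ 2)) :=
        (norm_add_le _ _).trans
          (add_le_add hleft ((norm_add_le _ _).trans (add_le_add hmiddle hright)))
    _ = 2 * δ + 8 / (3 * b * δ ^ 2) := by ring

theorem norm_integral_cubicOsc_le (a : ℝ) {b T : ℝ} (hb : 0 < b) (hT : 0 ≤ T) :
    ‖∫ θ in (0 : ℝ)..T, cubicOsc a b θ‖ ≤ 5 * b ^ (-(1 / 3) : ℝ) := by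
  -- `m` is the stationary point of the phase on `[0, ∞)`, or `0` if there is none.
  obtain ⟨m, hm, ham, hstat⟩ :
      ∃ m, 0 ≤ m ∧ 0 ≤ a + 3 * b * m ^ 2 ∧ (0 < m → a + 3 * b * m ^ 2 = 0) := by
    rcases le_or_gt 0 a with ha | ha
    · exact ⟨0, le_rfl, by simpa using ha, fun h ↦ absurd h (lt_irrefl 0)⟩
    · have hsq : a + 3 * b * √(-a / (3 * b)) ^ 2 = 0 := by
        rw [Real.sq_sqrt (div_nonneg (by linarith) (by positivity))]
        field_simp
        ring
      exact ⟨_, Real.sqrt_nonneg _, hsq.ge, fun _ ↦ hsq⟩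
  set δ := b ^ (-(1 / 3) : ℝ)
  have hδ : 0 < δ := by positivity
  have hbδ : b * δ ^ 3 = 1 := by
    rw [← Real.rpow_natCast, ← Real.rpow_mul hb.le]
    norm_num [Real.rpow_neg_one, hb.ne']
  calc _ ≤ 2 * δ + 8 / (3 * b * δ ^ 2) :=
        norm_integral_cubicOsc_le_of_window hb hδ hT hm ham hstat
    _ = 2 * δ + 8 / 3 * δ := by
        field_simp
        linear_combination (-8 : ℝ) * hbδ
    _ ≤ 5 * δ := by linarith

section SecondMeanValue

variable {E : Type*} [NormedAddCommGroup E] [NormedSpace ℝ E]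

theorem norm_intervalIntegral_smul_le_of_deriv_nonpos [CompleteSpace E] {f : ℝ → E}
    {g g' : ℝ → ℝ} {s t M : ℝ} (hst : s ≤ t) (hf : Continuous f)
    (hg : ∀ θ ∈ Icc s t, HasDerivAt g (g' θ) θ)
    (hg'_int : IntervalIntegrable g' volume s t) (hg'_nonpos : ∀ θ ∈ Icc s t, g' θ ≤ 0)
    (hgt : 0 ≤ g t) (hM : ∀ θ ∈ Icc s t, ‖∫ x in s..θ, f x‖ ≤ M) :
    ‖∫ θ in s..t, g θ • f θ‖ ≤ g s * M := by
  set V : ℝ → E := fun θ ↦ ∫ x in s..θ, f x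
  have hV : ∀ θ, HasDerivAt V (f θ) θ := fun θ ↦ (hf.integral_hasStrictDerivAt s θ).hasDerivAt
  have hg_uIcc : ∀ θ ∈ uIcc s t, HasDerivAt g (g' θ) θ := uIcc_of_le hst ▸ hg
  have hparts := integral_smul_deriv_eq_deriv_smul hg_uIcc (fun θ _ ↦ hV θ) hg'_int
    (hf.intervalIntegrable s t)
  have hg_drop : ∫ θ in s..t, -g' θ = g s - g t := by
    rw [intervalIntegral.integral_neg, integral_eq_sub_of_hasDerivAt hg_uIcc hg'_int]
    ring
  have hrest : ‖∫ θ in s..t, g' θ • V θ‖ ≤ (g s - g t) * M := by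
    rw [← hg_drop, ← intervalIntegral.integral_mul_const]
    refine norm_integral_le_of_norm_le hst (Eventually.of_forall fun θ hθ ↦ ?_)
      (hg'_int.neg.mul_const M)
    have hθ' := Ioc_subset_Icc_self hθ
    rw [norm_smul, Real.norm_eq_abs, abs_of_nonpos (hg'_nonpos θ hθ')]
    exact mul_le_mul_of_nonneg_left (hM θ hθ') (neg_nonneg.2 (hg'_nonpos θ hθ'))
  have hV_s : V s = 0 := integral_same
  rw [hparts, hV_s, smul_zero, sub_zero]
  calc _ ≤ ‖g t • V t‖ + ‖∫ θ in s..t, g' θ • V θ‖ := norm_sub_le _ _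
    _ ≤ g t * M + (g s - g t) * M := by
        rw [norm_smul, Real.norm_eq_abs, abs_of_nonneg hgt]
        exact add_le_add (mul_le_mul_of_nonneg_left (hM t (right_mem_Icc.2 hst)) hgt) hrest
    _ = g s * M := by ring

theorem norm_integral_Ioi_le_of_forall_intervalIntegral_le {f : ℝ → E} {a M : ℝ}
    (hf : IntegrableOn f (Ioi a)) (h : ∀ T, a ≤ T → ‖∫ x in a..T, f x‖ ≤ M) :
    ‖∫ x in Ioi a, f x‖ ≤ M :=
  le_of_tendsto (intervalIntegral_tendsto_integral_Ioi a hf tendsto_id).norm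
    ((eventually_ge_atTop a).mono h)

end SecondMeanValue

section QuarticDamping

variable {c : ℝ}

lemma integrable_exp_smul_cubicOsc (a b : ℝ) (hc : 0 < c) :
    Integrable fun θ : ℝ ↦ Real.exp (-(c * θ ^ 4)) • cubicOsc a b θ := by
  refine ((integrable_exp_neg_mul_sq hc).const_mul (Real.exp c)).mono' (by fun_prop)
    (Eventually.of_forall fun θ ↦ ?_)
  rw [norm_smul, norm_cubicOsc, mul_one, Real.norm_of_nonneg (Real.exp_nonneg _), ← Real.exp_add]
  gcongr
  nlinarith [sq_nonneg (θ ^ 2 - 1)]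

theorem norm_integral_Ioi_exp_smul_cubicOsc_le (a : ℝ) {b : ℝ} (hb : 0 < b) (hc : 0 < c) :
    ‖∫ θ in Ioi 0, Real.exp (-(c * θ ^ 4)) • cubicOsc a b θ‖ ≤ 5 * b ^ (-(1 / 3) : ℝ) := by
  refine norm_integral_Ioi_le_of_forall_intervalIntegral_le
    (integrable_exp_smul_cubicOsc a b hc).integrableOn fun T hT ↦ ?_
  have hg : ∀ θ, HasDerivAt (fun θ ↦ Real.exp (-(c * θ ^ 4)))
      (Real.exp (-(c * θ ^ 4)) * -(4 * c * θ ^ 3)) θ := fun θ ↦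
    ((hasDerivAt_pow 4 θ).const_mul c).neg.exp.congr_deriv (by simp; ring)
  simpa using norm_intervalIntegral_smul_le_of_deriv_nonpos hT (continuous_cubicOsc a b)
    (fun θ _ ↦ hg θ) (Continuous.intervalIntegrable (by fun_prop) _ _)
    (fun θ hθ ↦ mul_nonpos_of_nonneg_of_nonpos (Real.exp_nonneg _)
      (neg_nonpos.2 (mul_nonneg (by positivity) (pow_nonneg hθ.1 3))))
    (Real.exp_nonneg _) fun θ hθ ↦ norm_integral_cubicOsc_le a hb hθ.1

theorem norm_integral_Ioi_exp_smul_cubicOsc_le_abs (a : ℝ) {b : ℝ} (hb : b ≠ 0) (hc : 0 < c) :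
    ‖∫ θ in Ioi 0, Real.exp (-(c * θ ^ 4)) • cubicOsc a b θ‖ ≤ 5 * |b| ^ (-(1 / 3) : ℝ) := by
  rcases hb.lt_or_gt with hb | hb
  · have hconj : ∫ θ in Ioi 0, Real.exp (-(c * θ ^ 4)) • cubicOsc a b θ =
        starRingEnd ℂ (∫ θ in Ioi 0, Real.exp (-(c * θ ^ 4)) • cubicOsc (-a) (-b) θ) := by
      rw [← integral_conj]
      simp only [real_smul, map_mul, conj_ofReal, conj_cubicOsc, neg_neg]
    rw [hconj, RCLike.norm_conj, abs_of_neg hb]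
    exact norm_integral_Ioi_exp_smul_cubicOsc_le (-a) (neg_pos.2 hb) hc
  · rw [abs_of_pos hb]
    exact norm_integral_Ioi_exp_smul_cubicOsc_le a hb hc

theorem norm_integral_exp_smul_cubicOsc_le (a : ℝ) {b : ℝ} (hb : b ≠ 0) (hc : 0 < c) :
    ‖∫ θ, Real.exp (-(c * θ ^ 4)) • cubicOsc a b θ‖ ≤ 10 * |b| ^ (-(1 / 3) : ℝ) := by
  have hint := integrable_exp_smul_cubicOsc a b hc
  have hreflect : ∫ θ in Iic 0, Real.exp (-(c * θ ^ 4)) • cubicOsc a b θ =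
      ∫ θ in Ioi 0, Real.exp (-(c * θ ^ 4)) • cubicOsc (-a) (-b) θ := by
    rw [← neg_zero, ← integral_comp_neg_Ioi, neg_zero]
    simp only [cubicOsc_neg, Even.neg_pow (by decide : Even 4)]
  rw [← integral_Iic_add_Ioi hint.integrableOn hint.integrableOn, hreflect]
  calc _ ≤ 5 * |-b| ^ (-(1 / 3) : ℝ) + 5 * |b| ^ (-(1 / 3) : ℝ) :=
        (norm_add_le _ _).trans (add_le_add
          (norm_integral_Ioi_exp_smul_cubicOsc_le_abs (-a) (neg_ne_zero.2 hb) hc)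
          (norm_integral_Ioi_exp_smul_cubicOsc_le_abs a hb hc))
    _ = 10 * |b| ^ (-(1 / 3) : ℝ) := by rw [abs_neg]; ring

end QuarticDamping

/-- Uniform bound `|G(x,y)| ≤ C y^{-1/3}` for the approximate Green's function
`G(x,y) = (1/2π) ∫_ℝ e^{ixθ} e^{ic₃yθ³} e^{-c₄yθ⁴} dθ`. -/
theorem stmt_14 (c₃ c₄ : ℝ) (h3 : c₃ ≠ 0) (h4 : 0 < c₄) :
    ∃ C > (0 : ℝ), ∀ y : ℝ, 0 < y → ∀ x : ℝ,
      ‖(1 / (2 * Real.pi) : ℂ) * ∫ θ : ℝ,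
          Complex.exp (Complex.I * (x : ℂ) * (θ : ℂ)) *
            Complex.exp (Complex.I * (c₃ : ℂ) * (y : ℂ) * (θ : ℂ) ^ 3) *
            Complex.exp (((-(c₄ * y * θ ^ 4) : ℝ) : ℂ))‖
        ≤ C * y ^ (-(1 / 3) : ℝ) := by
  refine ⟨5 / Real.pi * |c₃| ^ (-(1 / 3) : ℝ), by positivity, fun y hy x ↦ ?_⟩
  have hintegrand : ∀ θ : ℝ, cexp (I * x * θ) * cexp (I * c₃ * y * θ ^ 3) *
      cexp (((-(c₄ * y * θ ^ 4) : ℝ) : ℂ)) =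
      Real.exp (-(c₄ * y * θ ^ 4)) • cubicOsc x (c₃ * y) θ := fun θ ↦ by
    rw [real_smul, cubicOsc, ofReal_exp, ← exp_add, ← exp_add, ← exp_add]
    push_cast
    ring_nf
  have hbound := norm_integral_exp_smul_cubicOsc_le x (mul_ne_zero h3 hy.ne') (mul_pos h4 hy)
  rw [abs_mul, abs_of_pos hy, Real.mul_rpow (abs_nonneg _) hy.le] at hbound
  simp_rw [hintegrand, norm_mul]
  calc _ ≤ 1 / (2 * Real.pi) * (10 * (|c₃| ^ (-(1 / 3) : ℝ) * y ^ (-(1 / 3) : ℝ))) := by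
        gcongr
        simp [abs_of_pos Real.pi_pos]
    _ = _ := by field_simp; ring
end

section
/- Fix c₃ > 0 and c₄ > 0 and let G(x,y) := (1/(2π)) ∫_ℝ e^{ixθ} e^{i c₃ y θ³} e^{-c₄ y θ⁴} dθ. Then for every μ ∈ ℝ, G(x,y) = (1/(2π)) ∫_ℝ e^{ix(iμ+θ)} e^{i c₃ y (iμ+θ)³} e^{-c₄ y (iμ+θ)⁴} dθ, and consequently |G(x,y)| ≤ (1/(2π)) e^{-xμ + c₃ y μ³ - c₄ y μ⁴} ∫_ℝ e^{-3yμ(c₃ - 2c₄μ)θ²} e^{-c₄ y θ⁴} dθ. -/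
/-!
The integrand `e^{ixz} e^{i c₃ y z³} e^{-c₄ y z⁴}` is entire, so by Cauchy's theorem its integrals
over the two horizontal sides of the rectangle `[-T, T] × [0, μ]` differ by the integrals over the
vertical sides. On the line `Im z = s` its modulus is
`exp (-x s + c₃ y s³ - c₄ y s⁴) · exp (-3 y s (c₃ - 2 c₄ s) θ²) · exp (-c₄ y θ⁴)`,
which for `|s| ≤ |μ|` is dominated by `exp (A + K T² - c₄ y T⁴)` with `A, K` independent of `s`;
the quartic term makes the vertical sides vanish as `T → ∞`, and integrating the modulus on
`Im z = μ` gives the bound.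
-/

open Complex Filter Topology MeasureTheory intervalIntegral

theorem integral_eq_integral_add_mul_I {E : Type*} [NormedAddCommGroup E] [NormedSpace ℂ E]
    [CompleteSpace E] {f : ℂ → E} (hf : Differentiable ℂ f) {μ : ℝ}
    (h₀ : Integrable fun x : ℝ => f x) (hμ : Integrable fun x : ℝ => f (x + μ * I))
    {g : ℝ → ℝ} (hg : Tendsto g atTop (𝓝 0))
    (hfg : ∀ T : ℝ, ∀ s ∈ Set.uIcc 0 μ, ‖f (T + s * I)‖ ≤ g |T|) :
    ∫ x : ℝ, f x = ∫ x : ℝ, f (x + μ * I) := by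
  have hvert : ∀ T : ℝ, ‖∫ s in (0 : ℝ)..μ, f (T + s * I)‖ ≤ g |T| * |μ| := fun T => by
    simpa using norm_integral_le_of_norm_le_const fun s hs => hfg T s (Set.uIoc_subset_uIcc hs)
  have hside : Tendsto (fun T : ℝ => I • (∫ s in (0 : ℝ)..μ, f (-T + s * I))
      - I • ∫ s in (0 : ℝ)..μ, f (T + s * I)) atTop (𝓝 0) := by
    refine squeeze_zero_norm' (a := fun T => 2 * (g T * |μ|)) ?_
      (by simpa using (hg.mul_const |μ|).const_mul 2)
    filter_upwards [eventually_ge_atTop 0] with T hT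
    have h1 := hvert (-T)
    have h2 := hvert T
    simp only [abs_neg, abs_of_nonneg hT, ofReal_neg] at h1 h2
    calc _ ≤ ‖I • (∫ s in (0 : ℝ)..μ, f (-T + s * I))‖ + ‖I • ∫ s in (0 : ℝ)..μ, f (T + s * I)‖ :=
          norm_sub_le _ _
      _ ≤ _ := by simp only [norm_smul, norm_I, one_mul]; linarith
  have hrect : ∀ T : ℝ, (∫ x in -T..T, f x) = (∫ x in -T..T, f (x + μ * I)) +
      (I • (∫ s in (0 : ℝ)..μ, f (-T + s * I)) - I • ∫ s in (0 : ℝ)..μ, f (T + s * I)) := by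
    intro T
    have := integral_boundary_rect_eq_zero_of_differentiableOn f (-T) (T + μ * I)
      hf.differentiableOn
    simp only [neg_im, ofReal_im, neg_zero, ofReal_zero, zero_mul, add_zero, neg_re, ofReal_re,
      add_re, mul_re, I_re, mul_zero, I_im, mul_one, sub_self, add_im, mul_im, zero_add,
      ofReal_neg] at this
    rw [← sub_eq_zero, ← this]; abel
  refine tendsto_nhds_unique
    (intervalIntegral_tendsto_integral h₀ tendsto_neg_atTop_atBot tendsto_id) ?_
  simpa only [id_eq, hrect, add_zero] using
    (intervalIntegral_tendsto_integral hμ tendsto_neg_atTop_atBot tendsto_id).add hside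

theorem integrable_exp_mul_sq_mul_exp_neg_mul_pow_four (a : ℝ) {b : ℝ} (hb : 0 < b) :
    Integrable fun θ : ℝ => Real.exp (a * θ ^ 2) * Real.exp (-b * θ ^ 4) := by
  refine ((integrable_exp_neg_mul_sq one_pos).const_mul (Real.exp ((a + 1) ^ 2 / (4 * b)))).mono'
    (by fun_prop) (ae_of_all _ fun θ => ?_)
  rw [Real.norm_of_nonneg (by positivity), ← Real.exp_add, ← Real.exp_add, Real.exp_le_exp]
  -- completing the square in `θ²`: `a θ² - b θ⁴ + θ² ≤ (a + 1)² / (4 b)`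
  have h4b : (0:ℝ) < 4 * b := by positivity
  rw [div_add' _ _ _ h4b.ne', le_div_iff₀ h4b]
  nlinarith [sq_nonneg (2 * b * θ ^ 2 - (a + 1))]

theorem tendsto_exp_add_mul_sq_sub_mul_pow_four (A K : ℝ) {c : ℝ} (hc : 0 < c) :
    Tendsto (fun T : ℝ => Real.exp (A + K * T ^ 2 - c * T ^ 4)) atTop (𝓝 0) := by
  have hK : ∀ T : ℝ, K * T ^ 2 ≤ K ^ 2 / (2 * c) + c / 2 * T ^ 4 := fun T => by
    rw [div_add' _ _ _ (by positivity), le_div_iff₀ (by positivity)]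
    nlinarith [sq_nonneg (c * T ^ 2 - K)]
  refine Real.tendsto_exp_atBot.comp <| tendsto_atBot_mono (fun T =>
    (by linarith [hK T] : A + K * T ^ 2 - c * T ^ 4 ≤ A + K ^ 2 / (2 * c) + -(c / 2 * T ^ 4))) ?_
  exact tendsto_atBot_add_const_left _ _ <| tendsto_neg_atTop_atBot.comp <|
    (tendsto_pow_atTop four_ne_zero).const_mul_atTop (by positivity)

noncomputable def greenIntegrand (c₃ c₄ x y : ℝ) (z : ℂ) : ℂ :=
  cexp (I * x * z) * cexp (I * c₃ * y * z ^ 3) * cexp (-c₄ * y * z ^ 4)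

section
variable {c₃ c₄ x y : ℝ}

theorem differentiable_greenIntegrand : Differentiable ℂ (greenIntegrand c₃ c₄ x y) := by
  unfold greenIntegrand; fun_prop

theorem norm_greenIntegrand_add_mul_I (θ s : ℝ) :
    ‖greenIntegrand c₃ c₄ x y (θ + s * I)‖ =
      Real.exp (-x * s + c₃ * y * s ^ 3 - c₄ * y * s ^ 4) *
        (Real.exp (-3 * y * s * (c₃ - 2 * c₄ * s) * θ ^ 2) * Real.exp (-c₄ * y * θ ^ 4)) := by
  simp only [greenIntegrand, norm_mul, norm_exp, ← Real.exp_add]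
  congr 1
  simp only [pow_succ, pow_zero, one_mul, mul_re, mul_im, add_re, add_im, I_re, I_im, ofReal_re,
    ofReal_im, neg_re, neg_im]
  ring

theorem norm_greenIntegrand_le_of_mem_uIcc (hy : 0 < y) (h4 : 0 < c₄) {μ s : ℝ}
    (hs : s ∈ Set.uIcc 0 μ) (T : ℝ) :
    ‖greenIntegrand c₃ c₄ x y (T + s * I)‖ ≤ Real.exp (|x| * |μ| + |c₃| * y * |μ| ^ 3
      + 3 * y * (|c₃| * |μ| + 2 * c₄ * μ ^ 2) * T ^ 2 - c₄ * y * T ^ 4) := by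
  have hsμ : |s| ≤ |μ| := by simpa using Set.abs_sub_left_of_mem_uIcc hs
  have le_abs_mul : ∀ a b c : ℝ, |b| ≤ |c| → a * b ≤ |a| * |c| := fun a b c h =>
    (le_abs_self _).trans (by rw [abs_mul]; gcongr)
  have h1 : -x * s ≤ |x| * |μ| := by simpa using le_abs_mul (-x) s μ hsμ
  have h2 : c₃ * s ^ 3 ≤ |c₃| * |μ| ^ 3 := by
    have := le_abs_mul c₃ (s ^ 3) (μ ^ 3) (by simp only [abs_pow]; gcongr)
    rwa [abs_pow] at this
  have h3 : -c₃ * s ≤ |c₃| * |μ| := by simpa using le_abs_mul (-c₃) s μ hsμ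
  have h4 : s ^ 2 ≤ μ ^ 2 := sq_le_sq.2 hsμ
  rw [norm_greenIntegrand_add_mul_I, ← Real.exp_add, ← Real.exp_add, Real.exp_le_exp]
  nlinarith [mul_le_mul_of_nonneg_left h2 hy.le,
    mul_le_mul_of_nonneg_left h3 (by positivity : 0 ≤ 3 * y * T ^ 2),
    mul_le_mul_of_nonneg_left h4 (by positivity : 0 ≤ 6 * c₄ * y * T ^ 2),
    (by positivity : 0 ≤ c₄ * y * s ^ 4)]

theorem integrable_greenIntegrand_add_mul_I (hy : 0 < y) (h4 : 0 < c₄) (μ : ℝ) :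
    Integrable fun θ : ℝ => greenIntegrand c₃ c₄ x y (θ + μ * I) := by
  refine ((integrable_exp_mul_sq_mul_exp_neg_mul_pow_four (-3 * y * μ * (c₃ - 2 * c₄ * μ))
    (mul_pos h4 hy)).const_mul (Real.exp (-x * μ + c₃ * y * μ ^ 3 - c₄ * y * μ ^ 4))).mono'
    (differentiable_greenIntegrand.continuous.comp (by fun_prop)).aestronglyMeasurable
    (ae_of_all _ fun θ => ?_)
  rw [norm_greenIntegrand_add_mul_I, neg_mul c₄]

theorem integral_greenIntegrand_eq_add_mul_I (hy : 0 < y) (h4 : 0 < c₄) (μ : ℝ) :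
    ∫ θ : ℝ, greenIntegrand c₃ c₄ x y θ = ∫ θ : ℝ, greenIntegrand c₃ c₄ x y (θ + μ * I) :=
  integral_eq_integral_add_mul_I differentiable_greenIntegrand
    (by simpa using integrable_greenIntegrand_add_mul_I hy h4 0)
    (integrable_greenIntegrand_add_mul_I hy h4 μ)
    (tendsto_exp_add_mul_sq_sub_mul_pow_four _ _ (mul_pos h4 hy))
    fun T s hs => by
      simpa [even_two.pow_abs, (by norm_num : Even 4).pow_abs] using
        norm_greenIntegrand_le_of_mem_uIcc hy h4 hs T

end

theorem stmt_15_general (c₃ c₄ : ℝ) (h4 : 0 < c₄) (x y : ℝ) (hy : 0 < y)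
    (μ : ℝ) :
    ((1 / (2 * Real.pi) : ℂ) * ∫ θ : ℝ,
        Complex.exp (Complex.I * (x : ℂ) * (θ : ℂ)) *
          Complex.exp (Complex.I * (c₃ : ℂ) * (y : ℂ) * (θ : ℂ) ^ 3) *
          Complex.exp (((-(c₄ * y * θ ^ 4) : ℝ) : ℂ)))
      = (1 / (2 * Real.pi) : ℂ) * ∫ θ : ℝ,
          Complex.exp (Complex.I * (x : ℂ) * (Complex.I * (μ : ℂ) + (θ : ℂ))) *
            Complex.exp (Complex.I * (c₃ : ℂ) * (y : ℂ)
              * (Complex.I * (μ : ℂ) + (θ : ℂ)) ^ 3) *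
            Complex.exp (-(c₄ : ℂ) * (y : ℂ) * (Complex.I * (μ : ℂ) + (θ : ℂ)) ^ 4)
    ∧ ‖(1 / (2 * Real.pi) : ℂ) * ∫ θ : ℝ,
          Complex.exp (Complex.I * (x : ℂ) * (θ : ℂ)) *
            Complex.exp (Complex.I * (c₃ : ℂ) * (y : ℂ) * (θ : ℂ) ^ 3) *
            Complex.exp (((-(c₄ * y * θ ^ 4) : ℝ) : ℂ))‖
        ≤ (1 / (2 * Real.pi)) * Real.exp (-x * μ + c₃ * y * μ ^ 3 - c₄ * y * μ ^ 4)
            * ∫ θ : ℝ, Real.exp (-3 * y * μ * (c₃ - 2 * c₄ * μ) * θ ^ 2)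
                * Real.exp (-c₄ * y * θ ^ 4) := by
  have hreal : ∀ θ : ℝ, cexp (I * x * θ) * cexp (I * c₃ * y * θ ^ 3) *
      cexp ((-(c₄ * y * θ ^ 4) : ℝ) : ℂ) = greenIntegrand c₃ c₄ x y θ := fun θ => by
    simp only [greenIntegrand, ofReal_neg, ofReal_mul, ofReal_pow, neg_mul]
  have hshifted : ∀ θ : ℝ, cexp (I * x * (I * μ + θ)) * cexp (I * c₃ * y * (I * μ + θ) ^ 3) *
      cexp (-c₄ * y * (I * μ + θ) ^ 4) = greenIntegrand c₃ c₄ x y (θ + μ * I) := fun θ => by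
    rw [greenIntegrand, add_comm (θ : ℂ), mul_comm (μ : ℂ)]
  simp only [hreal, hshifted]
  rw [integral_greenIntegrand_eq_add_mul_I hy h4 μ]
  refine ⟨rfl, ?_⟩
  have hπ : ‖(1 / (2 * Real.pi) : ℂ)‖ = 1 / (2 * Real.pi) := by
    simp [abs_of_pos Real.pi_pos]
  calc ‖(1 / (2 * Real.pi) : ℂ) * ∫ θ : ℝ, greenIntegrand c₃ c₄ x y (θ + μ * I)‖
      ≤ 1 / (2 * Real.pi) * ∫ θ : ℝ, ‖greenIntegrand c₃ c₄ x y (θ + μ * I)‖ := by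
        rw [norm_mul, hπ]; gcongr; exact norm_integral_le_integral_norm _
    _ = _ := by
        simp only [norm_greenIntegrand_add_mul_I, MeasureTheory.integral_const_mul, mul_assoc]

/-- Contour shift by `iμ` for the approximate Green's function, and the resulting
modulus bound. -/
theorem stmt_15 (c₃ c₄ : ℝ) (h3 : 0 < c₃) (h4 : 0 < c₄) (x y : ℝ) (hy : 0 < y)
    (μ : ℝ) :
    ((1 / (2 * Real.pi) : ℂ) * ∫ θ : ℝ,
        Complex.exp (Complex.I * (x : ℂ) * (θ : ℂ)) *
          Complex.exp (Complex.I * (c₃ : ℂ) * (y : ℂ) * (θ : ℂ) ^ 3) *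
          Complex.exp (((-(c₄ * y * θ ^ 4) : ℝ) : ℂ)))
      = (1 / (2 * Real.pi) : ℂ) * ∫ θ : ℝ,
          Complex.exp (Complex.I * (x : ℂ) * (Complex.I * (μ : ℂ) + (θ : ℂ))) *
            Complex.exp (Complex.I * (c₃ : ℂ) * (y : ℂ)
              * (Complex.I * (μ : ℂ) + (θ : ℂ)) ^ 3) *
            Complex.exp (-(c₄ : ℂ) * (y : ℂ) * (Complex.I * (μ : ℂ) + (θ : ℂ)) ^ 4)
    ∧ ‖(1 / (2 * Real.pi) : ℂ) * ∫ θ : ℝ,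
          Complex.exp (Complex.I * (x : ℂ) * (θ : ℂ)) *
            Complex.exp (Complex.I * (c₃ : ℂ) * (y : ℂ) * (θ : ℂ) ^ 3) *
            Complex.exp (((-(c₄ * y * θ ^ 4) : ℝ) : ℂ))‖
        ≤ (1 / (2 * Real.pi)) * Real.exp (-x * μ + c₃ * y * μ ^ 3 - c₄ * y * μ ^ 4)
            * ∫ θ : ℝ, Real.exp (-3 * y * μ * (c₃ - 2 * c₄ * μ) * θ ^ 2)
                * Real.exp (-c₄ * y * θ ^ 4) :=
  stmt_15_general c₃ c₄ h4 x y hy μ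
end
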